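/- Under the CGLO-style allocation where each of the N_t design points receives at least κ_{N_t} replications with κ_k → ∞, ∑_k k·exp(−aκ_k) < ∞ for all a > 0, and observations are i.i.d. Gaussian with variance bounded by σ̄², the event that some design point's sample mean deviates from its true mean by more than δ > 0 occurs only finitely often almost surely (over iterations t with N_t → ∞). -/

import Mathlib

/-!
A centred Gaussian of variance at most `s` is sub-Gaussian with parameter `s`, so the Chernoff
bound gives `P(|Ȳ - m| ≥ δ) ≤ 2 exp (-δ² / (2s))`. With `s = σ̄² / κ_{N_t}` and a union bound over
the `N_t` points, the deviation event at iteration `t` has probability at most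
`2 N_t exp (-a κ_{N_t})` with `a = δ² / (2σ̄²)`. Since `N` is injective these bounds form a
subseries of `∑ k exp (-a κ_k) < ∞`, and Borel–Cantelli concludes.
-/

open MeasureTheory ProbabilityTheory Filter Real
open scoped NNReal ENNReal

section

variable {Ω : Type*} [MeasurableSpace Ω] {P : Measure Ω}

lemma ProbabilityTheory.HasSubgaussianMGF.mono {X : Ω → ℝ} {c c' : ℝ≥0}
    (h : HasSubgaussianMGF X c P) (hc : c ≤ c') : HasSubgaussianMGF X c' P where
  integrable_exp_mul := h.integrable_exp_mul
  mgf_le t := (h.mgf_le t).trans (by gcongr)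

lemma ProbabilityTheory.HasSubgaussianMGF.measureReal_abs_ge_le {X : Ω → ℝ} {c : ℝ≥0}
    (h : HasSubgaussianMGF X c P) {ε : ℝ} (hε : 0 ≤ ε) :
    P.real {ω | ε ≤ |X ω|} ≤ 2 * exp (-ε ^ 2 / (2 * c)) := by
  have h_split : {ω | ε ≤ |X ω|} = {ω | ε ≤ X ω} ∪ {ω | ε ≤ (-X) ω} := by
    ext ω; simp [le_abs]
  calc P.real {ω | ε ≤ |X ω|}
      ≤ P.real {ω | ε ≤ X ω} + P.real {ω | ε ≤ (-X) ω} := h_split ▸ measureReal_union_le _ _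
    _ ≤ exp (-ε ^ 2 / (2 * c)) + exp (-ε ^ 2 / (2 * c)) :=
        add_le_add (h.measure_ge_le hε) (h.neg.measure_ge_le hε)
    _ = 2 * exp (-ε ^ 2 / (2 * c)) := (two_mul _).symm

lemma ProbabilityTheory.hasSubgaussianMGF_sub_of_map_eq_gaussianReal {X : Ω → ℝ} {μ : ℝ}
    {v : ℝ≥0} (hX : P.map X = gaussianReal μ v) :
    HasSubgaussianMGF (fun ω ↦ X ω - μ) v P := by
  have hX_law : HasLaw X (gaussianReal μ v) P :=
    ⟨aemeasurable_of_map_neZero (by rw [hX]; infer_instance), hX⟩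
  have h_centered := gaussianReal_sub_const hX_law μ
  rw [sub_self] at h_centered
  refine (HasSubgaussianMGF.id_map_iff h_centered.aemeasurable).1 ?_
  rw [h_centered.map_eq]
  exact ⟨integrable_exp_mul_gaussianReal, fun t ↦ by simp [mgf_id_gaussianReal]⟩

/-- Stated for any `s ≥ v` rather than for `v` itself: at `v = 0` the exponent `-ε² / (2 * 0)`
is the junk value `0`. -/
lemma ProbabilityTheory.measureReal_abs_sub_ge_le_of_map_eq_gaussianReal {X : Ω → ℝ} {μ : ℝ}
    {v : ℝ≥0} (hX : P.map X = gaussianReal μ v) {s : ℝ} (hvs : (v : ℝ) ≤ s) {ε : ℝ}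
    (hε : 0 ≤ ε) : P.real {ω | ε ≤ |X ω - μ|} ≤ 2 * exp (-ε ^ 2 / (2 * s)) := by
  have hv_le : v ≤ s.toNNReal := Real.le_toNNReal_iff_coe_le (v.2.trans hvs) |>.2 hvs
  simpa [Real.coe_toNNReal _ (v.2.trans hvs)] using
    ((hasSubgaussianMGF_sub_of_map_eq_gaussianReal hX).mono hv_le).measureReal_abs_ge_le hε

lemma MeasureTheory.measureReal_setOf_exists_lt_le {p : ℕ → Ω → Prop} {n : ℕ} {b : ℝ}
    (h : ∀ i < n, P.real {ω | p i ω} ≤ b) : P.real {ω | ∃ i < n, p i ω} ≤ n * b := by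
  have h_union : {ω | ∃ i < n, p i ω} = ⋃ i ∈ Finset.range n, {ω | p i ω} := by
    ext ω; simp
  calc P.real {ω | ∃ i < n, p i ω} ≤ ∑ i ∈ Finset.range n, P.real {ω | p i ω} :=
        h_union ▸ measureReal_biUnion_finset_le _ _
    _ ≤ ∑ _i ∈ Finset.range n, b :=
        Finset.sum_le_sum fun i hi ↦ h i (Finset.mem_range.1 hi)
    _ = n * b := by simp

lemma MeasureTheory.ae_finite_setOf_mem_of_summable_measureReal [IsFiniteMeasure P]
    {s : ℕ → Set Ω} (hs : Summable fun t ↦ P.real (s t)) :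
    ∀ᵐ ω ∂P, {t | ω ∈ s t}.Finite := by
  have h_tsum : ∑' t, P (s t) ≠ ∞ := by
    have h_eq : ∑' t, P (s t) = ENNReal.ofReal (∑' t, P.real (s t)) := by
      rw [ENNReal.ofReal_tsum_of_nonneg (fun _ ↦ measureReal_nonneg) hs]
      simp [ofReal_measureReal]
    exact h_eq ▸ ENNReal.ofReal_ne_top
  filter_upwards [ae_eventually_notMem h_tsum] with ω hω
  exact Set.not_infinite.1 fun h_inf ↦
    not_frequently.2 hω (Nat.frequently_atTop_iff_infinite.2 h_inf)

end

theorem deviation_events_finitely_often_general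
    {Ω : Type*} [MeasurableSpace Ω] (P : Measure Ω) [IsProbabilityMeasure P]
    (κ : ℕ → ℝ)
    (hκ_sum : ∀ a : ℝ, 0 < a → Summable (fun k : ℕ => (k : ℝ) * Real.exp (-a * κ k)))
    (hκ_pos : ∀ k, 0 < κ k)
    (N : ℕ → ℕ) (hN : StrictMono N)
    (σbarSq : ℝ) (hσ : 0 < σbarSq)
    (ybar : ℕ → ℕ → Ω → ℝ) (m : ℕ → ℕ → ℝ) (v : ℕ → ℕ → ℝ≥0)
    (hdist : ∀ t, ∀ i < N t, P.map (ybar t i) = gaussianReal (m t i) (v t i))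
    (hv : ∀ t, ∀ i < N t, (v t i : ℝ) ≤ σbarSq / κ (N t))
    (δ : ℝ) (hδ : 0 < δ) :
    ∀ᵐ ω ∂P, {t : ℕ | ∃ i < N t, δ < |ybar t i ω - m t i|}.Finite := by
  set a := δ ^ 2 / (2 * σbarSq) with ha
  have h_bound (t : ℕ) : P.real {ω | ∃ i < N t, δ < |ybar t i ω - m t i|} ≤
      N t * (2 * exp (-a * κ (N t))) := by
    have h_exponent : -δ ^ 2 / (2 * (σbarSq / κ (N t))) = -a * κ (N t) := by
      rw [ha]
      field_simp [(hκ_pos (N t)).ne']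
    refine measureReal_setOf_exists_lt_le fun i hi ↦ ?_
    calc P.real {ω | δ < |ybar t i ω - m t i|}
        ≤ P.real {ω | δ ≤ |ybar t i ω - m t i|} :=
          measureReal_mono (Set.ofPred_subset_ofPred.2 fun _ ↦ le_of_lt)
      _ ≤ 2 * exp (-a * κ (N t)) := h_exponent ▸
          measureReal_abs_sub_ge_le_of_map_eq_gaussianReal (hdist t i hi) (hv t i hi) hδ.le
  have h_summable : Summable fun t ↦ (N t : ℝ) * (2 * exp (-a * κ (N t))) := by
    refine (((hκ_sum a (by positivity)).comp_injective hN.injective).mul_left 2).congr fun t ↦ ?_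
    simp only [Function.comp_apply]
    ring
  exact ae_finite_setOf_mem_of_summable_measureReal
    (h_summable.of_nonneg_of_le (fun _ ↦ measureReal_nonneg) h_bound)

/-- Under the CGLO-style allocation, where at iteration `t` each of the `N t` design
points has a sample mean that is Gaussian with variance at most `σ̄²/κ_{N_t}`, with
`κ` nondecreasing, `κ_k → ∞` and `∑ k·exp(−a·κ_k) < ∞` for all `a > 0`, the event
that some design point's sample mean deviates from its true mean by more than `δ`
occurs only finitely often, almost surely. -/
theorem deviation_events_finitely_often
    {Ω : Type*} [MeasurableSpace Ω] (P : Measure Ω) [IsProbabilityMeasure P]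
    (κ : ℕ → ℝ) (hκ_mono : Monotone κ) (hκ_top : Tendsto κ atTop atTop)
    (hκ_sum : ∀ a : ℝ, 0 < a → Summable (fun k : ℕ => (k : ℝ) * Real.exp (-a * κ k)))
    (hκ_pos : ∀ k, 0 < κ k)
    (N : ℕ → ℕ) (hN : StrictMono N)
    (σbarSq : ℝ) (hσ : 0 < σbarSq)
    (ybar : ℕ → ℕ → Ω → ℝ) (m : ℕ → ℕ → ℝ) (v : ℕ → ℕ → ℝ≥0)
    (hdist : ∀ t, ∀ i < N t, P.map (ybar t i) = gaussianReal (m t i) (v t i))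
    (hv : ∀ t, ∀ i < N t, (v t i : ℝ) ≤ σbarSq / κ (N t))
    (δ : ℝ) (hδ : 0 < δ) :
    ∀ᵐ ω ∂P, {t : ℕ | ∃ i < N t, δ < |ybar t i ω - m t i|}.Finite :=
  deviation_events_finitely_often_general P κ hκ_sum hκ_pos N hN σbarSq hσ ybar m v hdist hv δ hδ
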